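/- Let n ≥ 1, let P be an n×n complex unitary matrix with P^n = 1 and trace(P^k) = 0 for every k with 1 ≤ k ≤ n − 1, and let a, b, c, d ∈ ℂ be such that C = !![a, b; c, d] is unitary with b ≠ 0. Set ω := b·c − a·d and Q := (b·c·ω) • (P · (1 − (a·ω)•P)⁻¹). Then trace(Q·Qᴴ) = n·|b|²·(1 − |a|^{2n}) / |1 − (aω)^n|². -/

import Mathlib

/-!
Since `P ^ n = 1`, the Neumann series of `(1 - x • P)⁻¹` truncates to
`(1 - x ^ n)⁻¹ • ∑_{k < n} x ^ k • P ^ k`. The trace conditions make `P ^ 0, …, P ^ (n - 1)`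
orthogonal for `(A, B) ↦ trace (A * Bᴴ)`, each of squared length `n`, so
`trace (Q * Qᴴ) = n ‖b c ω‖² ‖1 - xⁿ‖⁻² ∑_{k < n} ‖a‖^{2k}` with `x = a ω`. Unitarity of `C` gives
`‖ω‖ = 1`, `‖c‖ = ‖b‖` and `‖b‖² = 1 - ‖a‖²`, which sums the geometric series.
-/

open Matrix Finset

theorem Matrix.trace_mul_conjTranspose_eq_star {m R : Type*} [Fintype m] [CommSemiring R]
    [StarRing R] (A B : Matrix m m R) :
    trace (A * Bᴴ) = star (trace (B * Aᴴ)) := by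
  rw [← trace_conjTranspose, conjTranspose_mul, conjTranspose_conjTranspose]

section Unitary

variable {m R : Type*} [Fintype m] [DecidableEq m] [CommRing R] [StarRing R]

theorem Matrix.trace_unitary_mul_mul_conjTranspose {P : Matrix m m R}
    (hP : P ∈ unitary (Matrix m m R)) (A : Matrix m m R) :
    trace (P * A * (P * A)ᴴ) = trace (A * Aᴴ) := by
  have hP' : Pᴴ * P = 1 := hP.1
  rw [conjTranspose_mul, ← mul_assoc, trace_mul_comm, ← mul_assoc, ← mul_assoc, hP', one_mul]

theorem Matrix.trace_pow_add_mul_conjTranspose_pow {P : Matrix m m R}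
    (hP : P ∈ unitary (Matrix m m R)) (i k : ℕ) :
    trace (P ^ (i + k) * (P ^ k)ᴴ) = trace (P ^ i) := by
  rw [pow_add, mul_assoc, ← star_eq_conjTranspose,
    Unitary.mul_star_self_of_mem (pow_mem hP k), mul_one]

theorem Matrix.trace_pow_mul_conjTranspose_pow {P : Matrix m m R}
    (hP : P ∈ unitary (Matrix m m R)) {N : ℕ}
    (htr : ∀ k, 0 < k → k < N → trace (P ^ k) = 0) {j k : ℕ} (hj : j < N) (hk : k < N) :
    trace (P ^ j * (P ^ k)ᴴ) = if j = k then (Fintype.card m : R) else 0 := by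
  wlog hkj : k ≤ j generalizing j k
  · rw [trace_mul_conjTranspose_eq_star, this hk hj (by omega), if_neg (by omega),
      if_neg (by omega), star_zero]
  obtain ⟨i, rfl⟩ := Nat.exists_eq_add_of_le' hkj
  rw [trace_pow_add_mul_conjTranspose_pow hP]
  rcases i.eq_zero_or_pos with rfl | hi
  · simp
  · rw [htr i hi (by omega), if_neg (by omega)]

theorem Matrix.trace_sum_smul_mul_conjTranspose_self {A : ℕ → Matrix m m R} {N : ℕ} {c : R}
    (horth : ∀ j < N, ∀ k < N, trace (A j * (A k)ᴴ) = if j = k then c else 0) (f : ℕ → R) :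
    trace ((∑ k ∈ range N, f k • A k) * (∑ k ∈ range N, f k • A k)ᴴ) =
      c * ∑ k ∈ range N, f k * star (f k) := by
  simp_rw [conjTranspose_sum, conjTranspose_smul, sum_mul_sum, trace_sum, smul_mul_smul_comm,
    trace_smul, smul_eq_mul]
  calc _ = ∑ j ∈ range N, ∑ k ∈ range N, if j = k then c * (f j * star (f k)) else 0 := by
        refine sum_congr rfl fun j hj => sum_congr rfl fun k hk => ?_
        rw [horth j (mem_range.1 hj) k (mem_range.1 hk)]
        split_ifs <;> simp [mul_comm]
    _ = _ := by simp +contextual [Finset.mul_sum]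

end Unitary

theorem Matrix.inv_one_sub_smul_of_pow_eq_one {m K : Type*} [Fintype m] [DecidableEq m]
    [Field K] {P : Matrix m m K} {n : ℕ} (hPn : P ^ n = 1) {x : K} (hx : x ^ n ≠ 1) :
    (1 - x • P)⁻¹ = (1 - x ^ n)⁻¹ • ∑ k ∈ range n, x ^ k • P ^ k := by
  refine inv_eq_right_inv ?_
  rw [Matrix.mul_smul]
  simp_rw [← smul_pow]
  rw [mul_neg_geom_sum, smul_pow, hPn, ← one_smul K (1 : Matrix m m K), smul_smul, mul_one,
    ← sub_smul, smul_smul, inv_mul_cancel₀ (sub_ne_zero.2 hx.symm), one_smul]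

theorem Complex.norm_sq_add_norm_sq_of_mem_unitary_fin_two {a b c d : ℂ}
    (hC : !![a, b; c, d] ∈ unitary (Matrix (Fin 2) (Fin 2) ℂ)) :
    ‖a‖ ^ 2 + ‖b‖ ^ 2 = 1 ∧ ‖a‖ ^ 2 + ‖c‖ ^ 2 = 1 := by
  have hrow : (!![a, b; c, d] * star !![a, b; c, d]) 0 0 = 1 := by
    rw [Unitary.mul_star_self_of_mem hC, one_apply_eq]
  have hcol : (star !![a, b; c, d] * !![a, b; c, d]) 0 0 = 1 := by
    rw [Unitary.star_mul_self_of_mem hC, one_apply_eq]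
  simp only [star_eq_conjTranspose, Matrix.mul_apply, Fin.sum_univ_two, of_apply, cons_val',
    cons_val_fin_one, cons_val_zero, cons_val_one, conjTranspose_apply, RCLike.star_def,
    mul_conj', conj_mul'] at hrow hcol
  exact ⟨by exact_mod_cast hrow, by exact_mod_cast hcol⟩

theorem Complex.norm_mul_sub_mul_of_mem_unitary_fin_two {a b c d : ℂ}
    (hC : !![a, b; c, d] ∈ unitary (Matrix (Fin 2) (Fin 2) ℂ)) :
    ‖b * c - a * d‖ = 1 := by
  have := CStarRing.norm_of_mem_unitary (det_of_mem_unitary hC)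
  rwa [det_fin_two_of, ← norm_neg, neg_sub] at this

theorem stmt_11 (n : ℕ) (hn : 1 ≤ n)
    (P : Matrix (Fin n) (Fin n) ℂ) (hP : Pᴴ * P = 1) (hPn : P ^ n = 1)
    (htr : ∀ k : ℕ, 1 ≤ k → k ≤ n - 1 → Matrix.trace (P ^ k) = 0)
    (a b c d : ℂ)
    (hC : (!![a, b; c, d])ᴴ * !![a, b; c, d] = 1) (hb : b ≠ 0)
    (ω : ℂ) (hω : ω = b * c - a * d)
    (Q : Matrix (Fin n) (Fin n) ℂ)
    (hQ : Q = (b * c * ω) • (P * (1 - (a * ω) • P)⁻¹)) :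
    Matrix.trace (Q * Qᴴ) =
      (((n : ℝ) * ‖b‖ ^ 2 * (1 - ‖a‖ ^ (2 * n)) /
        ‖1 - (a * ω) ^ n‖ ^ 2 : ℝ) : ℂ) := by
  subst hQ
  have hCu : !![a, b; c, d] ∈ unitary (Matrix (Fin 2) (Fin 2) ℂ) := mem_unitaryGroup_iff'.2 hC
  have hPu : P ∈ unitary (Matrix (Fin n) (Fin n) ℂ) := mem_unitaryGroup_iff'.2 hP
  obtain ⟨hab, hac⟩ := Complex.norm_sq_add_norm_sq_of_mem_unitary_fin_two hCu
  have hω1 : ‖ω‖ = 1 := hω ▸ Complex.norm_mul_sub_mul_of_mem_unitary_fin_two hCu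
  have hxa : ‖a * ω‖ = ‖a‖ := by rw [norm_mul, hω1, mul_one]
  have hxn : (a * ω) ^ n ≠ 1 := by
    intro h
    have ha : ‖a‖ = 1 := by
      rw [← hxa, ← pow_eq_one_iff_of_nonneg (norm_nonneg _) (Nat.one_le_iff_ne_zero.1 hn),
        ← norm_pow, h, norm_one]
    exact hb (by simpa [ha] using hab)
  have horth : ∀ j < n, ∀ k < n, trace (P ^ j * (P ^ k)ᴴ) = if j = k then (n : ℂ) else 0 := by
    intro j hj k hk
    simpa using trace_pow_mul_conjTranspose_pow hPu (N := n)
      (fun k hk hkn => htr k hk (by omega)) hj hk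
  rw [inv_one_sub_smul_of_pow_eq_one hPn hxn, Matrix.mul_smul, smul_smul, conjTranspose_smul,
    smul_mul_smul_comm, trace_smul, trace_unitary_mul_mul_conjTranspose hPu,
    trace_sum_smul_mul_conjTranspose_self horth]
  simp only [Complex.star_def, Complex.mul_conj', smul_eq_mul]
  norm_cast
  simp only [norm_mul, norm_inv, norm_pow, hxa, hω1, mul_one]
  simp_rw [← pow_mul, mul_comm _ 2, pow_mul, ← mul_neg_geom_sum (‖a‖ ^ 2) n]
  have hD : ‖1 - (a * ω) ^ n‖ ≠ 0 := norm_ne_zero_iff.2 (sub_ne_zero.2 hxn.symm)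
  rw [mul_pow, mul_pow, show ‖c‖ ^ 2 = ‖b‖ ^ 2 by linarith,
    show 1 - ‖a‖ ^ 2 = ‖b‖ ^ 2 by linarith]
  field_simp
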